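/- Let a, b, c ∈ 𝕊max^∨. Then 𝟘 < (a ⊙ x₁ ⊙ x₁) ⊕ (b ⊙ x₁ ⊙ x₂) ⊕ (c ⊙ x₂ ⊙ x₂) holds for every pair (x₁, x₂) ∈ (𝕊max^∨)² ∖ {(𝟘,𝟘)} if and only if 𝟘 < a, 𝟘 < c, and b ⊙ b < a ⊙ c. -/

import Mathlib

/-!
Common framework: the symmetrized tropical semiring 𝕊max over a linearly
ordered abelian group Γ, represented concretely: an element is either 𝟘
(represented by `none`) or a pair of a modulus `c : Γ` and a sign
(positive, negative or balanced), matching the classes of the quotient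
𝕋max²/ℛ described in the paper.
-/

namespace TropPaper

inductive SSign : Type
  | pos
  | neg
  | bal
  deriving DecidableEq

/-- The symmetrized tropical semiring 𝕊max(Γ): `none` is 𝟘, and
`some (c, s)` is the class of modulus `c` and sign `s`. -/
def Smax (Γ : Type) : Type := Option (Γ × SSign)

/-- Γ is divisible. -/
def DivisibleGrp (Γ : Type) [AddCommGroup Γ] : Prop :=
  ∀ k : ℕ, 0 < k → ∀ a : Γ, ∃ b : Γ, k • b = a

section Defs

variable {Γ : Type} [AddCommGroup Γ] [LinearOrder Γ] [IsOrderedAddMonoid Γ]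

/-- 𝟘 -/
def szero : Smax Γ := none

/-- 𝟙 -/
def sone : Smax Γ := some ((0 : Γ), SSign.pos)

/-- modulus |·| : 𝕊max → 𝕋max = WithBot Γ -/
def smod : Smax Γ → WithBot Γ
  | none => ⊥
  | some (c, _) => (c : WithBot Γ)

def sgnMul : SSign → SSign → SSign
  | SSign.pos, t => t
  | SSign.neg, SSign.pos => SSign.neg
  | SSign.neg, SSign.neg => SSign.pos
  | SSign.neg, SSign.bal => SSign.bal
  | SSign.bal, _ => SSign.bal

/-- ⊕ on 𝕊max -/
def sadd : Smax Γ → Smax Γ → Smax Γ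
  | none, b => b
  | some a, none => some a
  | some (c, s), some (d, t) =>
      if c < d then some (d, t)
      else if d < c then some (c, s)
      else some (c, if s = t then s else SSign.bal)

/-- ⊖ (unary) on 𝕊max -/
def sneg : Smax Γ → Smax Γ
  | none => none
  | some (c, SSign.pos) => some (c, SSign.neg)
  | some (c, SSign.neg) => some (c, SSign.pos)
  | some (c, SSign.bal) => some (c, SSign.bal)

/-- ⊙ on 𝕊max -/
def smul : Smax Γ → Smax Γ → Smax Γ
  | none, _ => none
  | some _, none => none
  | some (c, s), some (d, t) => some (c + d, sgnMul s t)

/-- a ⊖ b -/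
def ssub (a b : Smax Γ) : Smax Γ := sadd a (sneg b)

/-- a° = a ⊖ a -/
def sbal (a : Smax Γ) : Smax Γ := ssub a a

/-- the positive element with the same modulus (|·| seen inside 𝕊max⊕) -/
def sabs : Smax Γ → Smax Γ
  | none => none
  | some (c, _) => some (c, SSign.pos)

/-- multiplicative inverse (of invertible, i.e. signed nonzero, elements) -/
def sinv : Smax Γ → Smax Γ
  | none => none
  | some (c, s) => some (-c, s)

/-- a^{⊙k} -/
def spow (a : Smax Γ) : ℕ → Smax Γ
  | 0 => sone
  | k + 1 => smul a (spow a k)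

/-- membership in 𝕊max° (balanced elements together with 𝟘) -/
def IsBal : Smax Γ → Prop
  | none => True
  | some (_, s) => s = SSign.bal

/-- membership in 𝕊max⊕ (positive elements together with 𝟘) -/
def IsPos : Smax Γ → Prop
  | none => True
  | some (_, s) => s = SSign.pos

/-- membership in 𝕊max^∨ (signed elements) -/
def IsSigned : Smax Γ → Prop
  | none => True
  | some (_, s) => s ≠ SSign.bal

/-- the balance relation a ∇ b -/
def Balance (a b : Smax Γ) : Prop := IsBal (ssub a b)

/-- a ⪯ b -/
def natLe (a b : Smax Γ) : Prop := sadd a b = b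

/-- a ≤ b :⟺ b ⊖ a ∈ 𝕊max⊕ ∪ 𝕊max° -/
def sle (a b : Smax Γ) : Prop := IsPos (ssub b a) ∨ IsBal (ssub b a)

/-- a < b :⟺ b ⊖ a ∈ 𝕊max⊕ ∖ {𝟘} -/
def slt (a b : Smax Γ) : Prop := IsPos (ssub b a) ∧ ssub b a ≠ szero

/-- finite ⊕-sum over a list -/
def sumS {α : Type} (l : List α) (f : α → Smax Γ) : Smax Γ :=
  (l.map f).foldr sadd szero

/-- finite ⊙-product over a list -/
def prodS {α : Type} (l : List α) (f : α → Smax Γ) : Smax Γ :=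
  (l.map f).foldr smul sone

/-- the zero vector -/
def zeroVecS {n : ℕ} : Fin n → Smax Γ := fun _ => szero

def VecSigned {n : ℕ} (x : Fin n → Smax Γ) : Prop := ∀ i, IsSigned (x i)

def MatSigned {n : ℕ} (A : Matrix (Fin n) (Fin n) (Smax Γ)) : Prop :=
  ∀ i j, IsSigned (A i j)

def SymmS {n : ℕ} (A : Matrix (Fin n) (Fin n) (Smax Γ)) : Prop :=
  ∀ i j, A i j = A j i

/-- A ⊙ v -/
def matVecS {n : ℕ} (A : Matrix (Fin n) (Fin n) (Smax Γ)) (v : Fin n → Smax Γ) :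
    Fin n → Smax Γ :=
  fun i => sumS (List.finRange n) fun j => smul (A i j) (v j)

/-- A ⊙ B -/
def matMulS {n : ℕ} (A B : Matrix (Fin n) (Fin n) (Smax Γ)) :
    Matrix (Fin n) (Fin n) (Smax Γ) :=
  Matrix.of fun i j => sumS (List.finRange n) fun l => smul (A i l) (B l j)

/-- the identity matrix I -/
def idMatS {n : ℕ} : Matrix (Fin n) (Fin n) (Smax Γ) :=
  Matrix.of fun i j => if i = j then sone else szero

/-- xᵀ ⊙ A ⊙ x -/
def quadFormS {n : ℕ} (A : Matrix (Fin n) (Fin n) (Smax Γ)) (x : Fin n → Smax Γ) :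
    Smax Γ :=
  sumS (List.finRange n) fun i => sumS (List.finRange n) fun j =>
    smul (x i) (smul (A i j) (x j))

/-- tropical positive definiteness (the quadratic-form condition) -/
def TPD {n : ℕ} (A : Matrix (Fin n) (Fin n) (Smax Γ)) : Prop :=
  ∀ x : Fin n → Smax Γ, VecSigned x → x ≠ zeroVecS → slt szero (quadFormS A x)

/-- tropical positive semidefiniteness -/
def TPSD {n : ℕ} (A : Matrix (Fin n) (Fin n) (Smax Γ)) : Prop :=
  ∀ x : Fin n → Smax Γ, VecSigned x → x ≠ zeroVecS → sle szero (quadFormS A x)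

/-- sgn(π) ∈ {𝟙, ⊖𝟙} -/
def permSignS {n : ℕ} (π : Equiv.Perm (Fin n)) : Smax Γ :=
  if (Equiv.Perm.sign π : ℤ) = 1 then sone else sneg sone

/-- the determinant over 𝕊max -/
noncomputable def detS {n : ℕ} (M : Matrix (Fin n) (Fin n) (Smax Γ)) : Smax Γ :=
  sumS (Finset.univ : Finset (Equiv.Perm (Fin n))).toList fun π =>
    smul (permSignS π) (prodS (List.finRange n) fun i => M i (π i))

/-- the adjugate matrix over 𝕊max -/
noncomputable def adjS {n : ℕ} (M : Matrix (Fin (n+1)) (Fin (n+1)) (Smax Γ)) :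
    Matrix (Fin (n+1)) (Fin (n+1)) (Smax Γ) :=
  Matrix.of fun i j =>
    smul (spow (sneg sone) (i.val + j.val))
      (detS (Matrix.of fun a b : Fin n => M (Fin.succAbove j a) (Fin.succAbove i b)))

/-- γ ⊙ I ⊖ A -/
def charMatS {n : ℕ} (γ : Smax Γ) (A : Matrix (Fin n) (Fin n) (Smax Γ)) :
    Matrix (Fin n) (Fin n) (Smax Γ) :=
  Matrix.of fun i j => ssub (smul γ (idMatS i j)) (A i j)

/-- tr_k(A) = ⊕_{|K| = k} det(A[K,K]) -/
noncomputable def trkS {n : ℕ} (k : ℕ) (A : Matrix (Fin n) (Fin n) (Smax Γ)) : Smax Γ :=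
  sumS ((Finset.univ : Finset (Fin n)).powersetCard k).attach.toList fun K =>
    detS (Matrix.of fun a b : Fin k =>
      A (K.1.orderEmbOfFin (Finset.mem_powersetCard.mp K.2).2 a)
        (K.1.orderEmbOfFin (Finset.mem_powersetCard.mp K.2).2 b))

/-- matrix power A^{⊙k} -/
def matPowS {n : ℕ} (A : Matrix (Fin n) (Fin n) (Smax Γ)) :
    ℕ → Matrix (Fin n) (Fin n) (Smax Γ)
  | 0 => idMatS
  | k + 1 => matMulS A (matPowS A k)

/-- partial Kleene sums I ⊕ A ⊕ ⋯ ⊕ A^{⊙m} -/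
def starPartialS {n : ℕ} (A : Matrix (Fin n) (Fin n) (Smax Γ)) (m : ℕ) :
    Matrix (Fin n) (Fin n) (Smax Γ) :=
  Matrix.of fun i j => sumS (List.range (m+1)) fun k => matPowS A k i j

/-- the diagonal matrix D^(k) with diagonal (γ₁,…,γ_{k−1},𝟘,…,𝟘) (0-based k) -/
def DmatS {n : ℕ} (A : Matrix (Fin n) (Fin n) (Smax Γ)) (k : Fin n) :
    Matrix (Fin n) (Fin n) (Smax Γ) :=
  Matrix.of fun i j => if i = j ∧ i < k then A i i else szero

/-- the complementary matrix A^(k) -/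
def AmatS {n : ℕ} (A : Matrix (Fin n) (Fin n) (Smax Γ)) (k : Fin n) :
    Matrix (Fin n) (Fin n) (Smax Γ) :=
  Matrix.of fun i j => if i ≠ j ∨ k ≤ i then A i j else szero

/-- M = (γ⊙I ⊖ D^(k))^{⊙−1} ⊙ A^(k) -/
def MmatS {n : ℕ} (A : Matrix (Fin n) (Fin n) (Smax Γ)) (k : Fin n) :
    Matrix (Fin n) (Fin n) (Smax Γ) :=
  Matrix.of fun i j =>
    smul (sinv (if i < k then sneg (A i i) else A k k)) (AmatS A k i j)

/-- λ_k = (⊖𝟙)^{⊙(k−1)} ⊙ γ₁ ⊙ ⋯ ⊙ γ_{k−1} ⊙ γ^{⊙(n−k)} (0-based k, size n) -/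
def lamkS {n : ℕ} (A : Matrix (Fin n) (Fin n) (Smax Γ)) (k : Fin n) : Smax Γ :=
  smul (spow (sneg sone) k.val)
    (smul (prodS ((List.finRange n).filter (fun i => i < k)) fun i => A i i)
      (spow (A k k) (n - 1 - k.val)))

/-- irreducibility: the digraph of nonzero entries is strongly connected -/
def IrreducibleS {n : ℕ} (A : Matrix (Fin n) (Fin n) (Smax Γ)) : Prop :=
  ∀ i j : Fin n, Relation.ReflTransGen (fun a b => A a b ≠ szero) i j

/-- diagonal entries sorted non-increasingly for ⪯ -/
def DiagSortedS {n : ℕ} (A : Matrix (Fin n) (Fin n) (Smax Γ)) : Prop :=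
  ∀ i j : Fin n, i ≤ j → natLe (A j j) (A i i)

/-! 𝕋max-side notions (for the characteristic polynomial of |A|). -/

/-- finite max over a list in 𝕋max -/
def sumT {α : Type} (l : List α) (f : α → WithBot Γ) : WithBot Γ :=
  (l.map f).foldr max ⊥

/-- finite ⊙-product over a list in 𝕋max -/
def prodT {α : Type} (l : List α) (f : α → WithBot Γ) : WithBot Γ :=
  (l.map f).foldr (· + ·) (0 : WithBot Γ)

/-- the permanent over 𝕋max -/
noncomputable def perT {n : ℕ} (M : Matrix (Fin n) (Fin n) (WithBot Γ)) : WithBot Γ :=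
  sumT (Finset.univ : Finset (Equiv.Perm (Fin n))).toList fun π =>
    prodT (List.finRange n) fun i => M i (π i)

/-- coefficient of X^k in the 𝕋max-characteristic polynomial of B -/
noncomputable def charCoeffT {n : ℕ} (B : Matrix (Fin n) (Fin n) (WithBot Γ)) (k : ℕ) : WithBot Γ :=
  if k ≤ n then
    sumT ((Finset.univ : Finset (Fin n)).powersetCard (n - k)).attach.toList fun K =>
      perT (Matrix.of fun a b : Fin (n - k) =>
        B (K.1.orderEmbOfFin (Finset.mem_powersetCard.mp K.2).2 a)
          (K.1.orderEmbOfFin (Finset.mem_powersetCard.mp K.2).2 b))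
  else ⊥

/-- multiplicity of x as a 𝕋max-root of the formal polynomial of degree ≤ n
with coefficients Q: for x = ⊥ it is the lower degree, for x = c ∈ Γ it is the
difference between the largest and smallest exponents attaining
max_k (Q_k + k·c). -/
noncomputable def rootMultT (n : ℕ) (Q : ℕ → WithBot Γ) (x : WithBot Γ) : ℕ :=
  WithBot.recBotCoe
    (sInf {k | Q k ≠ ⊥})
    (fun c =>
      sSup {k | k ≤ n ∧ Q k + ((k • c : Γ) : WithBot Γ)
              = sumT (List.range (n+1)) (fun l => Q l + ((l • c : Γ) : WithBot Γ))}
        - sInf {k | k ≤ n ∧ Q k + ((k • c : Γ) : WithBot Γ)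
              = sumT (List.range (n+1)) (fun l => Q l + ((l • c : Γ) : WithBot Γ))})
    x

end Defs

/-- the signed valuation associated with a valuation v on an ordered field L -/
def svMap {Γ : Type} [AddCommGroup Γ] [LinearOrder Γ] [IsOrderedAddMonoid Γ] {L : Type} [Field L] [LinearOrder L] [IsStrictOrderedRing L]
    (v : L → WithBot Γ) (b : L) : Smax Γ :=
  if b = 0 then szero
  else if 0 < b then WithBot.recBotCoe szero (fun c => some (c, SSign.pos)) (v b)
  else WithBot.recBotCoe szero (fun c => some (c, SSign.neg)) (v b)

end TropPaper

/-
The sign of the form is decided by moduli. For signed x₁, x₂ and positive a, c, the terms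
a ⊙ x₁² and c ⊙ x₂² are positive, while the cross term b ⊙ x₁ ⊙ x₂ has modulus
|b| + |x₁| + |x₂|. If 2|b| < |a| + |c| this is strictly below max(|a| + 2|x₁|, |c| + 2|x₂|)
(tropical AM–GM), so the cross term is absorbed and the form is positive.
Conversely, evaluating at (𝟙, 𝟘) and (𝟘, 𝟙) gives 𝟘 < a and 𝟘 < c; and if 2|b| ≥ |a| + |c|,
take |x₁| = |c| - |b|, x₂ = 𝟙, and the sign of x₁ that makes the cross term non-positive:
the cross term and c ⊙ x₂² then share the top modulus |c| with different signs, so the form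
is balanced.
-/

namespace TropPaper

lemma lt_max_of_add_self_lt {α : Type*} [AddCommMonoid α] [LinearOrder α] [IsOrderedAddMonoid α]
    {x y z : α} (h : x + x < y + z) : x < max y z := by
  by_contra! hle
  exact h.not_ge (add_le_add (le_of_max_le_left hle) (le_of_max_le_right hle))

lemma add_add_lt_max_of_add_self_lt {α : Type*} [AddCommMonoid α] [LinearOrder α]
    [IsOrderedCancelAddMonoid α] {a b c p q : WithBot α} (hb : b + b < a + c) (hp : p ≠ ⊥)
    (hq : q ≠ ⊥) : b + (p + q) < max (a + (p + p)) (c + (q + q)) := by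
  refine lt_max_of_add_self_lt ?_
  have hpq : p + q + (p + q) ≠ ⊥ := WithBot.add_ne_bot.2 ⟨WithBot.add_ne_bot.2 ⟨hp, hq⟩,
    WithBot.add_ne_bot.2 ⟨hp, hq⟩⟩
  calc b + (p + q) + (b + (p + q)) = b + b + (p + q + (p + q)) := by abel
    _ < a + c + (p + q + (p + q)) := WithBot.add_lt_add_right hpq hb
    _ = a + (p + p) + (c + (q + q)) := by abel

variable {Γ : Type}

lemma isPos_and_ne_szero_iff {z : Smax Γ} :
    IsPos z ∧ z ≠ szero ↔ ∃ m, z = some (m, SSign.pos) := by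
  rcases z with _ | ⟨c, _ | _ | _⟩
  · exact ⟨fun h => absurd rfl h.2, fun ⟨m, h⟩ => by cases h⟩
  · exact ⟨fun _ => ⟨c, rfl⟩, fun _ => ⟨rfl, fun h => by cases h⟩⟩
  all_goals exact ⟨fun h => (by cases h.1), fun ⟨m, h⟩ => (by cases h)⟩

lemma smod_ne_bot {x : Smax Γ} (hx : x ≠ szero) : smod x ≠ ⊥ := by
  rcases x with _ | ⟨c, s⟩
  · exact absurd rfl hx
  · exact WithBot.coe_ne_bot

lemma sgnMul_self {s : SSign} (hs : s ≠ SSign.bal) : sgnMul s s = SSign.pos := by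
  cases s
  · rfl
  · rfl
  · exact absurd rfl hs

lemma exists_sgnMul_ne_pos (s : SSign) : ∃ σ, σ ≠ SSign.bal ∧ sgnMul s σ ≠ SSign.pos := by
  cases s
  · exact ⟨.neg, by decide⟩
  · exact ⟨.pos, by decide⟩
  · exact ⟨.pos, by decide⟩

section Sum

variable [LinearOrder Γ]

lemma sadd_some_of_lt {c d : Γ} (s t : SSign) (h : c < d) :
    sadd (some (c, s)) (some (d, t)) = some (d, t) :=
  if_pos h

lemma sadd_some_of_gt {c d : Γ} (s t : SSign) (h : d < c) :
    sadd (some (c, s)) (some (d, t)) = some (c, s) :=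
  (if_neg h.not_gt).trans (if_pos h)

lemma sadd_some_self (c : Γ) (s t : SSign) :
    sadd (some (c, s)) (some (c, t)) = some (c, if s = t then s else SSign.bal) :=
  (if_neg (lt_irrefl c)).trans (if_neg (lt_irrefl c))

@[simp] lemma szero_sadd (x : Smax Γ) : sadd szero x = x := rfl

@[simp] lemma sadd_szero (x : Smax Γ) : sadd x szero = x := by
  cases x <;> rfl

lemma ssub_szero (x : Smax Γ) : ssub x szero = x := by
  cases x <;> rfl

lemma slt_iff_exists {x y : Smax Γ} : slt x y ↔ ∃ m, ssub y x = some (m, SSign.pos) :=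
  isPos_and_ne_szero_iff

lemma slt_szero_iff {x : Smax Γ} : slt szero x ↔ ∃ m, x = some (m, SSign.pos) := by
  rw [slt_iff_exists, ssub_szero]

lemma smod_sadd (x y : Smax Γ) : smod (sadd x y) = max (smod x) (smod y) := by
  rcases x with _ | ⟨c, s⟩ <;> rcases y with _ | ⟨d, t⟩
  · rfl
  · rfl
  · rfl
  · rcases lt_trichotomy c d with h | rfl | h
    · simp [sadd_some_of_lt _ _ h, smod, h.le]
    · simp [sadd_some_self, smod]
    · simp [sadd_some_of_gt _ _ h, smod, h.le]

lemma sadd_eq_right_of_smod_lt {x y : Smax Γ} (h : smod x < smod y) : sadd x y = y := by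
  rcases x with _ | ⟨c, s⟩ <;> rcases y with _ | ⟨d, t⟩
  · rfl
  · rfl
  · exact absurd h not_lt_bot
  · exact sadd_some_of_lt _ _ (WithBot.coe_lt_coe.1 h)

lemma sadd_eq_left_of_smod_lt {x y : Smax Γ} (h : smod y < smod x) : sadd x y = x := by
  rcases x with _ | ⟨c, s⟩ <;> rcases y with _ | ⟨d, t⟩
  · rfl
  · exact absurd h not_lt_bot
  · rfl
  · exact sadd_some_of_gt _ _ (WithBot.coe_lt_coe.1 h)

lemma sadd_sadd_eq_of_smod_lt {x y z : Smax Γ} (h : smod y < max (smod x) (smod z)) :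
    sadd (sadd x y) z = sadd x z := by
  rcases lt_or_ge (smod y) (smod x) with hyx | hxy
  · rw [sadd_eq_left_of_smod_lt hyx]
  · have hyz : smod y < smod z := by simpa [not_lt_of_ge hxy] using h
    have hxyz : smod (sadd x y) < smod z := by rwa [smod_sadd, max_eq_right hxy]
    rw [sadd_eq_right_of_smod_lt hxyz, sadd_eq_right_of_smod_lt (hxy.trans_lt hyz)]

lemma slt_szero_sadd {x y : Smax Γ} (hx : slt szero x) (hy : slt szero y) :
    slt szero (sadd x y) := by
  obtain ⟨c, rfl⟩ := slt_szero_iff.1 hx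
  obtain ⟨d, rfl⟩ := slt_szero_iff.1 hy
  rcases lt_trichotomy c d with h | rfl | h
  · rwa [sadd_some_of_lt _ _ h]
  · rwa [sadd_some_self, if_pos rfl]
  · rwa [sadd_some_of_gt _ _ h]

lemma exists_sadd_some_eq_pos_iff {c d : Γ} {t : SSign} (ht : t ≠ SSign.pos) :
    (∃ m, sadd (some (d, SSign.pos)) (some (c, t)) = some (m, SSign.pos)) ↔ c < d := by
  rcases lt_trichotomy c d with h | rfl | h
  · exact ⟨fun _ => h, fun _ => ⟨d, sadd_some_of_gt _ _ h⟩⟩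
  · rw [sadd_some_self, if_neg ht.symm]
    exact ⟨fun ⟨m, hm⟩ => (by cases hm), fun h => absurd h (lt_irrefl c)⟩
  · rw [sadd_some_of_lt _ _ h]
    exact ⟨fun ⟨m, hm⟩ => absurd (congrArg Prod.snd (Option.some.inj hm)) ht,
      fun h' => absurd h' h.not_gt⟩

lemma slt_iff_smod_lt {x y : Smax Γ} (hx : IsPos x ∨ IsBal x) (hy : IsPos y) :
    slt x y ↔ smod x < smod y := by
  rw [slt_iff_exists]
  rcases y with _ | ⟨d, _ | _ | _⟩ <;> try contradiction
  all_goals rcases x with _ | ⟨c, _ | _ | _⟩ <;> try (rcases hx with hx | hx <;> contradiction)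
  iterate 3 exact ⟨fun ⟨m, hm⟩ => (by cases hm), fun h => absurd h not_lt_bot⟩
  · exact ⟨fun _ => WithBot.bot_lt_coe d, fun _ => ⟨d, rfl⟩⟩
  all_goals exact (exists_sadd_some_eq_pos_iff (by decide)).trans WithBot.coe_lt_coe.symm

lemma sadd_sadd_eq_bal {x : Smax Γ} {m : Γ} {s : SSign} (hx : smod x ≤ m) (hs : s ≠ SSign.pos) :
    sadd (sadd x (some (m, s))) (some (m, SSign.pos)) = some (m, SSign.bal) := by
  have hms : sadd (some (m, s)) (some (m, SSign.pos)) = some (m, SSign.bal) := by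
    rw [sadd_some_self, if_neg hs]
  rcases hx.lt_or_eq with hlt | heq
  · rw [sadd_eq_right_of_smod_lt (y := some (m, s)) hlt, hms]
  · rcases x with _ | ⟨c, t⟩
    · cases heq
    · obtain rfl : c = m := WithBot.coe_injective heq
      rw [sadd_some_self, sadd_some_self]
      cases t <;> cases s <;> first | rfl | exact absurd rfl hs

end Sum

section Product

variable [AddCommGroup Γ]

@[simp] lemma szero_smul (x : Smax Γ) : smul szero x = szero := rfl

@[simp] lemma smul_szero (x : Smax Γ) : smul x szero = szero := by
  cases x <;> rfl

@[simp] lemma smul_sone (x : Smax Γ) : smul x sone = x := by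
  rcases x with _ | ⟨c, s⟩
  · rfl
  · show some (c + 0, sgnMul s .pos) = some (c, s)
    rw [add_zero]
    cases s <;> rfl

lemma smod_smul (x y : Smax Γ) : smod (smul x y) = smod x + smod y := by
  rcases x with _ | ⟨c, s⟩ <;> rcases y with _ | ⟨d, t⟩ <;> rfl

lemma isPos_or_isBal_smul_self (x : Smax Γ) : IsPos (smul x x) ∨ IsBal (smul x x) := by
  rcases x with _ | ⟨c, _ | _ | _⟩
  · exact Or.inl trivial
  · exact Or.inl rfl
  · exact Or.inl rfl
  · exact Or.inr rfl

variable [LinearOrder Γ]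

lemma isPos_smul_of_slt_szero {a c : Smax Γ} (ha : slt szero a) (hc : slt szero c) :
    IsPos (smul a c) := by
  obtain ⟨α, rfl⟩ := slt_szero_iff.1 ha
  obtain ⟨γ, rfl⟩ := slt_szero_iff.1 hc
  rfl

lemma slt_szero_smul_smul_self {c x : Smax Γ} (hc : slt szero c) (hx : IsSigned x)
    (hx₀ : x ≠ szero) : slt szero (smul c (smul x x)) := by
  obtain ⟨γ, rfl⟩ := slt_szero_iff.1 hc
  rcases x with _ | ⟨t, s⟩
  · exact absurd rfl hx₀
  · refine slt_szero_iff.2 ⟨γ + (t + t), ?_⟩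
    show some (γ + (t + t), sgnMul .pos (sgnMul s s)) = _
    rw [sgnMul_self hx]
    rfl

lemma slt_smul_self_iff {a b c : Smax Γ} (ha : slt szero a) (hc : slt szero c) :
    slt (smul b b) (smul a c) ↔ smod b + smod b < smod a + smod c := by
  rw [slt_iff_smod_lt (isPos_or_isBal_smul_self b) (isPos_smul_of_slt_szero ha hc), smod_smul,
    smod_smul]

end Product

section BinaryForm

variable [AddCommGroup Γ] [LinearOrder Γ]

def binForm (a b c x₁ x₂ : Smax Γ) : Smax Γ :=
  sadd (sadd (smul a (smul x₁ x₁)) (smul b (smul x₁ x₂))) (smul c (smul x₂ x₂))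

@[simp] lemma binForm_szero_left (a b c x₂ : Smax Γ) :
    binForm a b c szero x₂ = smul c (smul x₂ x₂) := by
  simp [binForm]

@[simp] lemma binForm_szero_right (a b c x₁ : Smax Γ) :
    binForm a b c x₁ szero = smul a (smul x₁ x₁) := by
  simp [binForm]

variable [IsOrderedAddMonoid Γ]

lemma binForm_pos {a b c x₁ x₂ : Smax Γ} (ha : slt szero a) (hc : slt szero c)
    (hb : smod b + smod b < smod a + smod c) (h₁ : IsSigned x₁) (h₂ : IsSigned x₂)
    (hx : ¬(x₁ = szero ∧ x₂ = szero)) : slt szero (binForm a b c x₁ x₂) := by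
  by_cases hx₁ : x₁ = szero
  · subst hx₁
    exact binForm_szero_left a b c x₂ ▸ slt_szero_smul_smul_self hc h₂ fun h => hx ⟨rfl, h⟩
  by_cases hx₂ : x₂ = szero
  · subst hx₂
    exact binForm_szero_right a b c x₁ ▸ slt_szero_smul_smul_self ha h₁ hx₁
  have hcross : smod (smul b (smul x₁ x₂)) <
      max (smod (smul a (smul x₁ x₁))) (smod (smul c (smul x₂ x₂))) := by
    simp only [smod_smul]
    exact add_add_lt_max_of_add_self_lt hb (smod_ne_bot hx₁) (smod_ne_bot hx₂)
  rw [binForm, sadd_sadd_eq_of_smod_lt hcross]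
  exact slt_szero_sadd (slt_szero_smul_smul_self ha h₁ hx₁) (slt_szero_smul_smul_self hc h₂ hx₂)

lemma exists_not_binForm_pos {a b c : Smax Γ} (ha : slt szero a) (hc : slt szero c)
    (hb : smod a + smod c ≤ smod b + smod b) :
    ∃ x₁, IsSigned x₁ ∧ ¬slt szero (binForm a b c x₁ sone) := by
  obtain ⟨α, rfl⟩ := slt_szero_iff.1 ha
  obtain ⟨γ, rfl⟩ := slt_szero_iff.1 hc
  rcases b with _ | ⟨β, s⟩
  · exact absurd hb (not_le.2 (WithBot.bot_lt_coe (α + γ)))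
  have hβ : α + γ ≤ β + β := WithBot.coe_le_coe.1 hb
  obtain ⟨σ, hσ, hsσ⟩ := exists_sgnMul_ne_pos s
  refine ⟨some (γ - β, σ), hσ, fun hpos => ?_⟩
  have hsq : smod (smul (some (α, SSign.pos)) (smul (some (γ - β, σ)) (some (γ - β, σ)))) ≤ γ := by
    refine WithBot.coe_le_coe.2 ?_
    calc α + ((γ - β) + (γ - β)) = α + γ + (γ - β - β) := by abel
      _ ≤ β + β + (γ - β - β) := add_le_add_left hβ _
      _ = γ := by abel
  have hcross : smul (some (β, s)) (smul (some (γ - β, σ)) sone) = some (γ, sgnMul s σ) := by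
    rw [smul_sone (some (γ - β, σ))]
    show some (β + (γ - β), sgnMul s σ) = _
    rw [add_sub_cancel]
  unfold binForm at hpos
  rw [hcross, smul_sone sone, smul_sone (some (γ, SSign.pos)),
    sadd_sadd_eq_bal hsq hsσ] at hpos
  obtain ⟨m, hm⟩ := slt_szero_iff.1 hpos
  cases hm

end BinaryForm

theorem binary_form_positive_iff_general {Γ : Type} [AddCommGroup Γ] [LinearOrder Γ] [IsOrderedAddMonoid Γ]
    (a b c : Smax Γ) :
    (∀ x₁ x₂ : Smax Γ, IsSigned x₁ → IsSigned x₂ → ¬(x₁ = szero ∧ x₂ = szero) →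
        slt szero
          (sadd (sadd (smul a (smul x₁ x₁)) (smul b (smul x₁ x₂)))
            (smul c (smul x₂ x₂)))) ↔
      (slt szero a ∧ slt szero c ∧ slt (smul b b) (smul a c)) := by
  have hsone : IsSigned (sone : Smax Γ) := SSign.noConfusion
  have hsone₀ : (sone : Smax Γ) ≠ szero := fun h => by cases h
  constructor
  · intro H
    have ha : slt szero a := by simpa using H sone szero hsone trivial fun h => hsone₀ h.1
    have hc : slt szero c := by simpa using H szero sone trivial hsone fun h => hsone₀ h.2
    refine ⟨ha, hc, (slt_smul_self_iff ha hc).2 (not_le.1 fun hb => ?_)⟩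
    obtain ⟨x₁, hx₁, hQ⟩ := exists_not_binForm_pos ha hc hb
    exact hQ (H x₁ sone hx₁ hsone fun h => hsone₀ h.2)
  · rintro ⟨ha, hc, hb⟩ x₁ x₂ h₁ h₂ hx
    exact binForm_pos ha hc ((slt_smul_self_iff ha hc).1 hb) h₁ h₂ hx

/-- for signed a, b, c, the binary quadratic form
a⊙x₁⊙x₁ ⊕ b⊙x₁⊙x₂ ⊕ c⊙x₂⊙x₂ is > 𝟘 on all signed (x₁,x₂) ≠ (𝟘,𝟘)
iff 𝟘 < a, 𝟘 < c and b⊙b < a⊙c. -/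
theorem binary_form_positive_iff {Γ : Type} [AddCommGroup Γ] [LinearOrder Γ] [IsOrderedAddMonoid Γ] [Nontrivial Γ]
    (hdiv : DivisibleGrp Γ)
    (a b c : Smax Γ) (ha : IsSigned a) (hb : IsSigned b) (hc : IsSigned c) :
    (∀ x₁ x₂ : Smax Γ, IsSigned x₁ → IsSigned x₂ → ¬(x₁ = szero ∧ x₂ = szero) →
        slt szero
          (sadd (sadd (smul a (smul x₁ x₁)) (smul b (smul x₁ x₂)))
            (smul c (smul x₂ x₂)))) ↔
      (slt szero a ∧ slt szero c ∧ slt (smul b b) (smul a c)) :=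
  binary_form_positive_iff_general a b c

end TropPaper
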